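/- arXiv:0903.3331 — 3 statements merged into one kernel-verified Lean document; each statement's English description precedes it below -/
import Mathlib

section
/- For any d×d matrix B with strictly positive entries, let ν(B) = max over indices α,β,γ of b_{αβ}/b_{αγ}. Then for all vectors λ, λ' in the standard open simplex (all coordinates positive, coordinates summing to 1), one has ‖Bλ'/‖Bλ'‖₁ − Bλ/‖Bλ‖₁‖₁ ≤ ν(B)² · ‖λ − λ'‖₁, where ‖x‖₁ denotes the sum of absolute values of coordinates. -/
/-!
Write `u = Bλ` and `v = Bλ'`. As `λ' - λ` has zero sum, `v i - u i = ∑ j, (B i j - c) (λ' j - λ j)`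
for every constant `c`; centring at the midrange of row `i` bounds `|v i - u i|` by half the spread
of that row times `‖λ - λ'‖₁`. The ratio bound `ν` traps row `i` between `v i / ν` and `ν v i`, so
`‖v - u‖₁ ≤ (ν - ν⁻¹)/2 · ‖v‖₁ · ‖λ - λ'‖₁`. Normalizing costs at most a factor `2/‖v‖₁`, leaving
`(ν - ν⁻¹) ‖λ - λ'‖₁ ≤ ν² ‖λ - λ'‖₁`.
-/

open Finset Matrix

theorem le_ciSup₃_of_finite {α ι κ μ : Type*} [ConditionallyCompleteLattice α] [Finite ι]
    [Finite κ] [Finite μ] (f : ι → κ → μ → α) (i : ι) (j : κ) (k : μ) :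
    f i j k ≤ ⨆ i, ⨆ j, ⨆ k, f i j k :=
  le_ciSup_of_le (Finite.bddAbove_range _) i <|
    le_ciSup_of_le (Finite.bddAbove_range _) j <| le_ciSup (Finite.bddAbove_range _) k

theorem norm_inv_norm_smul_sub_le {E : Type*} [NormedAddCommGroup E] [NormedSpace ℝ E]
    {x y : E} (hy : y ≠ 0) :
    ‖‖y‖⁻¹ • y - ‖x‖⁻¹ • x‖ ≤ 2 * ‖y - x‖ / ‖y‖ := by
  have hy' : 0 < ‖y‖ := norm_pos_iff.mpr hy
  have hsplit : ‖y‖⁻¹ • y - ‖x‖⁻¹ • x = ‖y‖⁻¹ • (y - x) + (‖y‖⁻¹ - ‖x‖⁻¹) • x := by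
    rw [smul_sub, sub_smul]; abel
  have hrescale : ‖(‖y‖⁻¹ - ‖x‖⁻¹) • x‖ ≤ ‖y - x‖ / ‖y‖ := by
    rcases eq_or_ne x 0 with rfl | hx
    · simp only [smul_zero, norm_zero]; positivity
    have hx' : 0 < ‖x‖ := norm_pos_iff.mpr hx
    calc ‖(‖y‖⁻¹ - ‖x‖⁻¹) • x‖ = |‖x‖ - ‖y‖| / ‖y‖ := by
          have : (‖y‖⁻¹ - ‖x‖⁻¹) * ‖x‖ = (‖x‖ - ‖y‖) / ‖y‖ := by field_simp
          rw [norm_smul, Real.norm_eq_abs, ← abs_of_pos hx', ← abs_mul, abs_of_pos hx', this,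
            abs_div, abs_of_pos hy']
      _ ≤ ‖y - x‖ / ‖y‖ := by
          gcongr; rw [abs_sub_comm]; exact abs_norm_sub_norm_le y x
  calc ‖‖y‖⁻¹ • y - ‖x‖⁻¹ • x‖
      ≤ ‖‖y‖⁻¹ • (y - x)‖ + ‖(‖y‖⁻¹ - ‖x‖⁻¹) • x‖ := hsplit ▸ norm_add_le _ _
    _ ≤ ‖y - x‖ / ‖y‖ + ‖y - x‖ / ‖y‖ := by
        gcongr
        rw [norm_smul, norm_inv, norm_norm, inv_mul_eq_div]
    _ = 2 * ‖y - x‖ / ‖y‖ := by ring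

theorem sum_abs_div_sub_div_le {ι : Type*} [Fintype ι] (u v : ι → ℝ) (hv : v ≠ 0) :
    ∑ i, |v i / (∑ j, |v j|) - u i / (∑ j, |u j|)|
      ≤ 2 * (∑ i, |v i - u i|) / ∑ j, |v j| := by
  have hl1 : ∀ w : ι → ℝ, ‖WithLp.toLp 1 w‖ = ∑ i, |w i| := fun w => by
    simp [PiLp.norm_eq_of_L1]
  have h := norm_inv_norm_smul_sub_le (x := WithLp.toLp 1 u) (y := WithLp.toLp 1 v)
    (by simpa using hv)
  rw [← WithLp.toLp_smul, ← WithLp.toLp_smul, ← WithLp.toLp_sub, ← WithLp.toLp_sub] at h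
  simpa only [hl1, Pi.sub_apply, Pi.smul_apply, smul_eq_mul, inv_mul_eq_div] using h

theorem abs_sum_mul_le_of_sum_eq_zero {ι : Type*} [Fintype ι] {f δ : ι → ℝ} {m M : ℝ}
    (hδ : ∑ j, δ j = 0) (hm : ∀ j, m ≤ f j) (hM : ∀ j, f j ≤ M) :
    |∑ j, f j * δ j| ≤ (M - m) / 2 * ∑ j, |δ j| := by
  set c := (M + m) / 2 with hc
  have hcentre : ∑ j, f j * δ j = ∑ j, (f j - c) * δ j := by
    simp only [sub_mul, sum_sub_distrib, ← mul_sum, hδ, mul_zero, sub_zero]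
  calc |∑ j, f j * δ j| ≤ ∑ j, |f j - c| * |δ j| := by
        rw [hcentre]; simpa only [abs_mul] using abs_sum_le_sum_abs (fun j => (f j - c) * δ j) univ
    _ ≤ ∑ j, (M - m) / 2 * |δ j| := by
        gcongr with j
        rw [abs_le]; constructor <;> linarith [hm j, hM j]
    _ = (M - m) / 2 * ∑ j, |δ j| := (mul_sum ..).symm

section RatioBounded

variable {ι : Type*} [Fintype ι] {f w : ι → ℝ} {ν : ℝ}

theorem le_mul_dotProduct_of_le_mul (hf : ∀ j k, f j ≤ ν * f k) (hw : ∀ k, 0 ≤ w k)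
    (hw1 : ∑ k, w k = 1) (j : ι) : f j ≤ ν * (f ⬝ᵥ w) := by
  calc f j = ∑ k, f j * w k := by rw [← mul_sum, hw1, mul_one]
    _ ≤ ∑ k, ν * f k * w k := by gcongr with k; exacts [hw k, hf j k]
    _ = ν * (f ⬝ᵥ w) := by simp only [dotProduct, mul_sum, mul_assoc]

theorem dotProduct_le_mul_of_le_mul (hf : ∀ j k, f j ≤ ν * f k) (hw : ∀ k, 0 ≤ w k)
    (hw1 : ∑ k, w k = 1) (j : ι) : f ⬝ᵥ w ≤ ν * f j := by
  calc f ⬝ᵥ w = ∑ k, f k * w k := rfl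
    _ ≤ ∑ k, ν * f j * w k := by gcongr with k; exacts [hw k, hf k j]
    _ = ν * f j := by rw [← mul_sum, hw1, mul_one]

end RatioBounded

section RowRatioBounded

variable {m n : Type*} [Fintype n] {B : Matrix m n ℝ} {ν : ℝ} {x y : n → ℝ}

theorem abs_mulVec_sub_mulVec_le (hν : 0 < ν) (hB : ∀ i j k, B i j ≤ ν * B i k)
    (hx1 : ∑ j, x j = 1) (hy : ∀ j, 0 ≤ y j) (hy1 : ∑ j, y j = 1) (i : m) :
    |(B *ᵥ y) i - (B *ᵥ x) i| ≤ (ν - ν⁻¹) / 2 * (B *ᵥ y) i * ∑ j, |x j - y j| := by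
  have hdiff : (B *ᵥ y) i - (B *ᵥ x) i = ∑ j, B i j * (y j - x j) := by
    simp only [mulVec, dotProduct, mul_sub, sum_sub_distrib]
  have hlower : ∀ j, (B *ᵥ y) i / ν ≤ B i j := fun j =>
    (div_le_iff₀' hν).mpr (dotProduct_le_mul_of_le_mul (hB i) hy hy1 j)
  have hupper : ∀ j, B i j ≤ ν * (B *ᵥ y) i := le_mul_dotProduct_of_le_mul (hB i) hy hy1
  have hzero : ∑ j, (y j - x j) = 0 := by rw [sum_sub_distrib, hx1, hy1, sub_self]
  calc |(B *ᵥ y) i - (B *ᵥ x) i|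
      ≤ (ν * (B *ᵥ y) i - (B *ᵥ y) i / ν) / 2 * ∑ j, |y j - x j| :=
        hdiff ▸ abs_sum_mul_le_of_sum_eq_zero hzero hlower hupper
    _ = (ν - ν⁻¹) / 2 * (B *ᵥ y) i * ∑ j, |x j - y j| := by
        simp only [abs_sub_comm (y _)]; ring

theorem sum_abs_mulVec_sub_mulVec_le [Fintype m] (hν : 0 < ν) (hB : ∀ i j k, B i j ≤ ν * B i k)
    (hx1 : ∑ j, x j = 1) (hy : ∀ j, 0 ≤ y j) (hy1 : ∑ j, y j = 1) :
    ∑ i, |(B *ᵥ y) i - (B *ᵥ x) i|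
      ≤ (ν - ν⁻¹) / 2 * (∑ i, (B *ᵥ y) i) * ∑ j, |x j - y j| := by
  calc ∑ i, |(B *ᵥ y) i - (B *ᵥ x) i|
      ≤ ∑ i, (ν - ν⁻¹) / 2 * (B *ᵥ y) i * ∑ j, |x j - y j| :=
        sum_le_sum fun i _ => abs_mulVec_sub_mulVec_le hν hB hx1 hy hy1 i
    _ = (ν - ν⁻¹) / 2 * (∑ i, (B *ᵥ y) i) * ∑ j, |x j - y j| := by rw [← sum_mul, ← mul_sum]

end RowRatioBounded

/-- For a matrix `B` with strictly positive entries and `ν(B) = max_{α,β,γ} B α β / B α γ`,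
the normalized images of two points of the open simplex satisfy the Lipschitz-type bound
`‖Bλ'/|Bλ'| − Bλ/|Bλ|‖₁ ≤ ν(B)² ‖λ − λ'‖₁`. -/
theorem stmt_0 (d : ℕ) (hd : 0 < d) (B : Matrix (Fin d) (Fin d) ℝ)
    (hB : ∀ i j, 0 < B i j)
    (ν : ℝ) (hν : ν = ⨆ α : Fin d, ⨆ β : Fin d, ⨆ γ : Fin d, B α β / B α γ)
    (lam lam' : Fin d → ℝ)
    (hlam : (∀ i, 0 < lam i) ∧ ∑ i, lam i = 1)
    (hlam' : (∀ i, 0 < lam' i) ∧ ∑ i, lam' i = 1) :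
    ∑ i, |B.mulVec lam' i / (∑ j, |B.mulVec lam' j|)
          - B.mulVec lam i / (∑ j, |B.mulVec lam j|)|
      ≤ ν ^ 2 * ∑ i, |lam i - lam' i| := by
  let i₀ : Fin d := ⟨0, hd⟩
  have hne : (univ : Finset (Fin d)).Nonempty := ⟨i₀, mem_univ _⟩
  have hBν : ∀ i j k, B i j ≤ ν * B i k := fun i j k => by
    rw [← div_le_iff₀ (hB i k), hν]
    exact le_ciSup₃_of_finite (fun α β γ => B α β / B α γ) i j k
  have hν1 : 1 ≤ ν := (le_mul_iff_one_le_left (hB i₀ i₀)).mp (hBν i₀ i₀ i₀)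
  have hν0 : 0 < ν := one_pos.trans_le hν1
  have hpos : ∀ i, 0 < (B *ᵥ lam') i := fun i =>
    sum_pos (fun j _ => mul_pos (hB i j) (hlam'.1 j)) hne
  have hnorm : ∑ j, |(B *ᵥ lam') j| = ∑ j, (B *ᵥ lam') j :=
    sum_congr rfl fun j _ => abs_of_pos (hpos j)
  have hsum : 0 < ∑ j, (B *ᵥ lam') j := sum_pos (fun j _ => hpos j) hne
  calc _ ≤ 2 * (∑ i, |(B *ᵥ lam') i - (B *ᵥ lam) i|) / ∑ j, |(B *ᵥ lam') j| :=
        sum_abs_div_sub_div_le _ _ fun h => (hpos i₀).ne' (congrFun h i₀)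
    _ ≤ 2 * ((ν - ν⁻¹) / 2 * (∑ i, (B *ᵥ lam') i) * ∑ j, |lam j - lam' j|)
          / ∑ j, (B *ᵥ lam') j := by
        rw [hnorm]
        gcongr
        exact sum_abs_mulVec_sub_mulVec_le hν0 hBν hlam.2 (fun j => (hlam'.1 j).le) hlam'.2
    _ = (ν - ν⁻¹) * ∑ j, |lam j - lam' j| := by field_simp
    _ ≤ ν ^ 2 * ∑ i, |lam i - lam' i| := by
        gcongr
        nlinarith [inv_pos.mpr hν0]
end

section
/- The set DC₁ of irrational numbers α ∈ [0,1) for which there exists c > 0 with |p − qα| > c/|q| for all integers p and all nonzero integers q is dense in [0,1). -/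
/-!
The golden ratio `φ` is badly approximable: for `q ≠ 0` the product `(p - qφ)(p - qψ)` with its
conjugate `ψ` is a nonzero integer, while `|p - qψ| = O(|q|)` whenever `|p - qφ| < 1`, so
`|p - qφ| ≫ 1/|q|`. Bad approximability is preserved by rational translations, and the rational
translates of `φ` are dense; those in `(0, 1)` lie in `DC₁`.
-/

open Real goldenRatio

def BadlyApproximable (α : ℝ) : Prop :=
  ∃ c > (0 : ℝ), ∀ p q : ℤ, q ≠ 0 → c / |(q : ℝ)| < |(p : ℝ) - q * α|

lemma Irrational.intCast_sub_intCast_mul_ne_zero {α : ℝ} (h : Irrational α) (p : ℤ) {q : ℤ}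
    (hq : q ≠ 0) : (p : ℝ) - q * α ≠ 0 :=
  ((h.intCast_mul hq).intCast_sub p).ne_zero

lemma badlyApproximable_of_add_of_mul {α β : ℝ} (hα : Irrational α) {s t : ℤ}
    (hsum : α + β = s) (hprod : α * β = t) : BadlyApproximable α := by
  have hβ : Irrational β := by
    rw [eq_sub_of_add_eq' hsum]
    exact hα.intCast_sub s
  set d := |α - β|
  refine ⟨1 / (2 * (1 + d)), by positivity, fun p q hq => ?_⟩
  have hq1 : (1 : ℝ) ≤ |(q : ℝ)| := by exact_mod_cast Int.one_le_abs hq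
  have hnorm : 1 ≤ |(p : ℝ) - q * α| * |(p : ℝ) - q * β| := by
    have hN : ((p : ℝ) - q * α) * (p - q * β) = ((p ^ 2 - p * q * s + q ^ 2 * t : ℤ) : ℝ) := by
      push_cast
      linear_combination (-(p : ℝ) * q) * hsum + (q : ℝ) ^ 2 * hprod
    have hN0 : p ^ 2 - p * q * s + q ^ 2 * t ≠ 0 := by
      have := mul_ne_zero (hα.intCast_sub_intCast_mul_ne_zero p hq)
        (hβ.intCast_sub_intCast_mul_ne_zero p hq)
      exact_mod_cast hN ▸ this
    rw [← abs_mul, hN]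
    exact_mod_cast Int.one_le_abs hN0
  rcases le_or_gt 1 |(p : ℝ) - q * α| with hA | hA
  · calc 1 / (2 * (1 + d)) / |(q : ℝ)| ≤ 1 / (2 * (1 + d)) := div_le_self (by positivity) hq1
      _ < 1 := by rw [div_lt_one (by positivity)]; linarith [abs_nonneg (α - β)]
      _ ≤ _ := hA
  · have hB : |(p : ℝ) - q * β| ≤ (1 + d) * |(q : ℝ)| := calc
      |(p : ℝ) - q * β| = |((p : ℝ) - q * α) + q * (α - β)| := by ring_nf
      _ ≤ |(p : ℝ) - q * α| + |(q : ℝ)| * d := by rw [← abs_mul]; exact abs_add_le _ _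
      _ ≤ (1 + d) * |(q : ℝ)| := by nlinarith [abs_nonneg (α - β)]
    have hB0 : 0 < |(p : ℝ) - q * β| := by nlinarith [abs_nonneg ((p : ℝ) - q * α)]
    calc 1 / (2 * (1 + d)) / |(q : ℝ)| < 1 / ((1 + d) * |(q : ℝ)|) := by
          rw [div_div, one_div_lt_one_div (by positivity) (by positivity)]
          nlinarith [abs_nonneg (α - β)]
      _ ≤ 1 / |(p : ℝ) - q * β| := one_div_le_one_div_of_le hB0 hB
      _ ≤ |(p : ℝ) - q * α| := by rw [div_le_iff₀ hB0]; exact hnorm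

lemma badlyApproximable_goldenRatio : BadlyApproximable φ :=
  badlyApproximable_of_add_of_mul goldenRatio_irrational (s := 1) (t := -1)
    (by exact_mod_cast goldenRatio_add_goldenConj) (by exact_mod_cast goldenRatio_mul_goldenConj)

lemma BadlyApproximable.add_ratCast {α : ℝ} (h : BadlyApproximable α) (r : ℚ) :
    BadlyApproximable (α + r) := by
  obtain ⟨c, hc, hα⟩ := h
  have hden : (0 : ℝ) < r.den := by exact_mod_cast r.pos
  refine ⟨c / r.den ^ 2, by positivity, fun p q hq => ?_⟩
  have key := hα (p * r.den - q * r.num) (q * r.den) (mul_ne_zero hq (by exact_mod_cast r.den_nz))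
  have heq : (p : ℝ) - q * (α + r) =
      (((p * r.den - q * r.num : ℤ) : ℝ) - ((q * r.den : ℤ) : ℝ) * α) / r.den := by
    rw [Rat.cast_def]
    push_cast
    field_simp
    ring
  rw [heq, abs_div, abs_of_pos hden, lt_div_iff₀ hden]
  push_cast at key ⊢
  rw [abs_mul, abs_of_pos hden] at key
  calc c / r.den ^ 2 / |(q : ℝ)| * r.den = c / (|(q : ℝ)| * r.den) := by field_simp
    _ < _ := key

lemma denseRange_add_ratCast (α : ℝ) : DenseRange fun r : ℚ => α + r :=
  (Homeomorph.addLeft α).surjective.denseRange.comp Rat.denseRange_cast (by fun_prop)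

/-- The set `DC₁` of badly approximable irrationals in `[0,1)` is dense in `[0,1)`. -/
theorem stmt_3 :
    let DC₁ : Set ℝ :=
      {α | α ∈ Set.Ico (0 : ℝ) 1 ∧ Irrational α ∧
        ∃ c > (0 : ℝ), ∀ p : ℤ, ∀ q : ℤ, q ≠ 0 → c / |(q : ℝ)| < |(p : ℝ) - (q : ℝ) * α|}
    ∀ x ∈ Set.Ico (0 : ℝ) 1, x ∈ closure DC₁ := by
  intro DC₁ x hx
  have htranslates : Set.Ioo 0 1 ∩ Set.range (fun r : ℚ => φ + r) ⊆ DC₁ := by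
    rintro _ ⟨hmem, r, rfl⟩
    exact ⟨Set.Ioo_subset_Ico_self hmem, goldenRatio_irrational.add_ratCast r,
      badlyApproximable_goldenRatio.add_ratCast r⟩
  have hIcc : Set.Icc (0 : ℝ) 1 ⊆ closure DC₁ := by
    rw [← closure_Ioo zero_ne_one]
    exact closure_minimal ((Dense.open_subset_closure_inter (denseRange_add_ratCast φ)
      isOpen_Ioo).trans (closure_mono htranslates)) isClosed_closure
  exact hIcc (Set.Ico_subset_Icc_self hx)
end

section
/- Let d ≥ 4 and let π̄ = (π̄₀, π̄₁) be a standard pair of bijections of {1,…,d} with π̄₀ the identity (so π̄₁(1) = d and π̄₁(d) = 1), satisfying the condition that π̄₁(k+1) ≠ π̄₁(k) + 1 for 1 ≤ k < d. Let Ω be the antisymmetric d×d matrix with Ω_{αβ} = +1 if π̄₁(α) > π̄₁(β) and α < β, Ω_{αβ} = −1 if π̄₁(α) < π̄₁(β) and α > β, and 0 otherwise. Let A ⊆ ℝ be an additive subgroup, let τ ∈ ℝ^d have coordinates τ₁,…,τ_d independent over A, and let h = −Ωτ. Then h_{d−2}, h_{d−1}, h_d are independent over A. -/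
/-!
Pairing `∑ aₖ h_{rₖ} = 0` with `τ` gives an `A`-linear relation among the `τᵢ`, because the
entries of `Ω` are integers; hence the combination `a₁ Ω_u + a₂ Ω_v + a₃ Ω_w` of the last three
rows of `Ω` vanishes columnwise. The first column, where `π₁` is maximal, gives
`a₁ + a₂ + a₃ = 0`; the last column, where `π₁` is minimal, gives `a₁ + a₂ = 0`; and a column in
which the consecutive rows `u`, `v` differ, which exists because `π₁ v ≠ π₁ u + 1`, gives
`a₁ = 0`.
-/

open Finset Matrix

theorem vecMul_eq_zero_of_dotProduct_mulVec_eq_zero {R κ ι : Type*} [Ring R] [Fintype κ]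
    [Fintype ι] {A : AddSubgroup R} {τ : ι → R}
    (hτ : ∀ a : ι → R, (∀ i, a i ∈ A) → ∑ i, a i * τ i = 0 → ∀ i, a i = 0)
    {M : Matrix κ ι R} (hM : ∀ k i, ∀ x ∈ A, x * M k i ∈ A) {c : κ → R} (hc : ∀ k, c k ∈ A)
    (h : c ⬝ᵥ (M *ᵥ τ) = 0) : c ᵥ* M = 0 := by
  refine funext (hτ _ (fun i => A.sum_mem fun k _ => hM k i _ (hc k)) ?_)
  rwa [dotProduct_mulVec] at h

def translationMatrix (R : Type*) [Ring R] {d : ℕ} (π : Equiv.Perm (Fin d)) :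
    Matrix (Fin d) (Fin d) R :=
  Matrix.of fun α β => if π β < π α ∧ α < β then 1 else if π α < π β ∧ β < α then -1 else 0

section TranslationMatrix

variable (R : Type*) [Ring R] {d : ℕ} (π : Equiv.Perm (Fin d)) {α β : Fin d}

theorem translationMatrix_apply_eq_one (h : α < β) (hπ : π β < π α) :
    translationMatrix R π α β = 1 := by
  simp [translationMatrix, h, hπ]

theorem translationMatrix_apply_eq_neg_one (h : β < α) (hπ : π α < π β) :
    translationMatrix R π α β = -1 := by
  simp [translationMatrix, h, hπ, h.not_gt, hπ.not_gt]

theorem translationMatrix_apply_eq_zero (h : α < β ↔ π α < π β) :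
    translationMatrix R π α β = 0 := by
  simp only [translationMatrix, of_apply]
  rw [if_neg, if_neg]
  · exact fun ⟨hπ, hβα⟩ => hβα.not_gt (h.2 hπ)
  · exact fun ⟨hπ, hαβ⟩ => hπ.not_gt (h.1 hαβ)

theorem mul_translationMatrix_mem {A : AddSubgroup R} {x : R} (hx : x ∈ A) (α β : Fin d) :
    x * translationMatrix R π α β ∈ A := by
  simp only [translationMatrix, of_apply]
  split_ifs <;> simp [hx, A.neg_mem hx]

theorem translationMatrix_apply_of_isBot_of_isTop (hβ : IsBot β) (hπβ : IsTop (π β))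
    (hα : α ≠ β) : translationMatrix R π α β = -1 :=
  translationMatrix_apply_eq_neg_one R π ((hβ α).lt_of_ne hα.symm)
    ((hπβ (π α)).lt_of_ne (π.injective.ne hα))

theorem translationMatrix_apply_of_isTop_of_isBot (hβ : IsTop β) (hπβ : IsBot (π β))
    (hα : α ≠ β) : translationMatrix R π α β = 1 :=
  translationMatrix_apply_eq_one R π ((hβ α).lt_of_ne hα)
    ((hπβ (π α)).lt_of_ne (π.injective.ne hα).symm)

theorem exists_translationMatrix_apply_ne [Nontrivial R] (hαβ : (β : ℕ) = α + 1)
    (hπ : (π β : ℕ) ≠ π α + 1) :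
    ∃ s, translationMatrix R π α s ≠ translationMatrix R π β s := by
  have hlt : α < β := by rw [Fin.lt_def]; omega
  -- `s = β` if `π β < π α`, else `s = π⁻¹ (π α + 1)`, which lies on one side of both `α`, `β`.
  rcases (π.injective.ne hlt.ne').lt_or_gt with hπβα | hπαβ
  · refine ⟨β, ?_⟩
    rw [translationMatrix_apply_eq_one R π hlt hπβα,
      translationMatrix_apply_eq_zero R π (iff_of_false (lt_irrefl _) (lt_irrefl _))]
    exact one_ne_zero
  · rw [Fin.lt_def] at hπαβ
    set s := π.symm ⟨π α + 1, by omega⟩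
    have hs : (π s : ℕ) = π α + 1 := by simp [s]
    have hπαs : π α < π s := by rw [Fin.lt_def]; omega
    have hπsβ : π s < π β := by rw [Fin.lt_def]; omega
    have hsα : s ≠ α := fun h => by rw [h] at hs; omega
    have hsβ : s ≠ β := fun h => by rw [h] at hs; omega
    refine ⟨s, ?_⟩
    rcases hsα.lt_or_gt with hsα' | hαs
    · have hsβ' : s < β := hsα'.trans hlt
      rw [translationMatrix_apply_eq_neg_one R π hsα' hπαs,
        translationMatrix_apply_eq_zero R π (iff_of_false hsβ'.not_gt hπsβ.not_gt)]
      exact neg_ne_zero.2 one_ne_zero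
    · have hβs : β < s := by
        rw [Fin.lt_def] at hαs ⊢
        exact lt_of_le_of_ne (by omega) (fun h => hsβ (Fin.ext h.symm))
      rw [translationMatrix_apply_eq_zero R π (iff_of_true hαs hπαs),
        translationMatrix_apply_eq_one R π hβs hπsβ]
      exact zero_ne_one

end TranslationMatrix

theorem eq_zero_of_translationMatrix_last_rows {R : Type*} [CommRing R] [IsDomain R] {d : ℕ}
    {π : Equiv.Perm (Fin d)} {o u v w : Fin d} (ho : IsBot o) (hw : IsTop w)
    (hπo : IsTop (π o)) (hπw : IsBot (π w)) (hou : o ≠ u) (huv : (v : ℕ) = u + 1)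
    (hvw : (w : ℕ) = v + 1) (hstar : (π v : ℕ) ≠ π u + 1) {a₁ a₂ a₃ : R}
    (h : ∀ j, a₁ * translationMatrix R π u j + a₂ * translationMatrix R π v j
      + a₃ * translationMatrix R π w j = 0) :
    a₁ = 0 ∧ a₂ = 0 ∧ a₃ = 0 := by
  have hou' : (o : ℕ) < u := Fin.lt_def.1 ((ho u).lt_of_ne hou)
  have hcol₀ : a₁ + a₂ + a₃ = 0 := by
    have hentry := fun α => translationMatrix_apply_of_isBot_of_isTop R π (α := α) ho hπo
    have := h o
    rw [hentry u hou.symm, hentry v (Fin.ne_of_val_ne (by omega)),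
      hentry w (Fin.ne_of_val_ne (by omega))] at this
    linear_combination -this
  have hcolLast : a₁ + a₂ = 0 := by
    have hentry := fun α => translationMatrix_apply_of_isTop_of_isBot R π (α := α) hw hπw
    have := h w
    rw [hentry u (Fin.ne_of_val_ne (by omega)), hentry v (Fin.ne_of_val_ne (by omega)),
      translationMatrix_apply_eq_zero R π (iff_of_false (lt_irrefl _) (lt_irrefl _))] at this
    linear_combination this
  have ha₃ : a₃ = 0 := by linear_combination hcol₀ - hcolLast
  obtain ⟨s, hs⟩ := exists_translationMatrix_apply_ne R π huv hstar
  have ha₁ : a₁ = 0 := by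
    have : a₁ * (translationMatrix R π u s - translationMatrix R π v s) = 0 := by
      linear_combination h s - translationMatrix R π v s * hcolLast
        - translationMatrix R π w s * ha₃
    exact (mul_eq_zero.1 this).resolve_right (sub_ne_zero.2 hs)
  exact ⟨ha₁, by linear_combination hcolLast - ha₁, ha₃⟩

/-- For a standard pair `π̄` in `𝒫*` with `π̄₀ = id` on `{1,…,d}`, `d ≥ 4`, translation
matrix `Ω`, and `τ` with coordinates independent over an additive subgroup `A`, the last
three coordinates of `h = −Ωτ` are independent over `A`. -/
theorem stmt_6 (d : ℕ) (hd : 4 ≤ d) (π₁ : Equiv.Perm (Fin d))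
    (hstd₁ : (π₁ ⟨0, by omega⟩ : ℕ) = d - 1)
    (hstd₂ : (π₁ ⟨d - 1, by omega⟩ : ℕ) = 0)
    (hstar : ∀ k : ℕ, (hk : k + 1 < d) →
      (π₁ ⟨k + 1, hk⟩ : ℕ) ≠ (π₁ ⟨k, by omega⟩ : ℕ) + 1)
    (Ω : Matrix (Fin d) (Fin d) ℝ)
    (hΩ : ∀ α β, Ω α β =
      if π₁ β < π₁ α ∧ α < β then 1
      else if π₁ α < π₁ β ∧ β < α then -1 else 0)
    (A : AddSubgroup ℝ) (τ : Fin d → ℝ)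
    (hτ : ∀ a : Fin d → ℝ, (∀ i, a i ∈ A) → ∑ i, a i * τ i = 0 → ∀ i, a i = 0)
    (h : Fin d → ℝ) (hh : h = -(Ω.mulVec τ)) :
    ∀ a₁ a₂ a₃ : ℝ, a₁ ∈ A → a₂ ∈ A → a₃ ∈ A →
      a₁ * h ⟨d - 3, by omega⟩ + a₂ * h ⟨d - 2, by omega⟩ + a₃ * h ⟨d - 1, by omega⟩ = 0 →
      a₁ = 0 ∧ a₂ = 0 ∧ a₃ = 0 := by
  intro a₁ a₂ a₃ ha₁ ha₂ ha₃ heq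
  obtain rfl : Ω = translationMatrix ℝ π₁ := Matrix.ext hΩ
  subst hh
  refine eq_zero_of_translationMatrix_last_rows (π := π₁) (o := ⟨0, by omega⟩)
    (u := ⟨d - 3, by omega⟩) (v := ⟨d - 2, by omega⟩) (w := ⟨d - 1, by omega⟩)
    (fun γ => Nat.zero_le γ) (fun γ => Nat.le_sub_one_of_lt γ.isLt)
    (fun γ => Fin.le_def.2 (hstd₁ ▸ Nat.le_sub_one_of_lt γ.isLt))
    (fun γ => Fin.le_def.2 (hstd₂ ▸ Nat.zero_le _)) (Fin.ne_of_val_ne (show 0 ≠ d - 3 by omega))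
    (show d - 2 = d - 3 + 1 by omega) (show d - 1 = d - 2 + 1 by omega)
    (by convert hstar (d - 3) (by omega) using 4; omega) fun j => ?_
  have := vecMul_eq_zero_of_dotProduct_mulVec_eq_zero hτ
    (M := (translationMatrix ℝ π₁).submatrix ![⟨d - 3, by omega⟩, ⟨d - 2, by omega⟩,
      ⟨d - 1, by omega⟩] id)
    (fun k i x hx => mul_translationMatrix_mem ℝ π₁ hx _ _) (c := ![a₁, a₂, a₃])
    (by simp [Fin.forall_fin_succ, ha₁, ha₂, ha₃])
    (by simp [dotProduct, Fin.sum_univ_three, mulVec] at heq ⊢; linarith)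
  simpa [vecMul, dotProduct, Fin.sum_univ_three] using congrFun this j
end
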